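/- Let G be the Gersten group, presented by generators a, b, s, t and relators ab = ba, s a s⁻¹ = a⁻¹b², t a t⁻¹ = b. Then every nontrivial subgroup S of G (finitely generated or not) admits a surjective group homomorphism onto ℤ. -/

import Mathlib

/-- Generators `a, b, s, t` of the Gersten group. -/
def a14 : FreeGroup (Fin 4) := FreeGroup.of 0
def b14 : FreeGroup (Fin 4) := FreeGroup.of 1
def s14 : FreeGroup (Fin 4) := FreeGroup.of 2
def t14 : FreeGroup (Fin 4) := FreeGroup.of 3

/-- Relators `ab = ba`, `s a s⁻¹ = a⁻¹b²`, `t a t⁻¹ = b` of the Gersten group. -/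
def relsGersten : Set (FreeGroup (Fin 4)) :=
  {a14 * b14 * (b14 * a14)⁻¹, s14 * a14 * s14⁻¹ * (a14⁻¹ * b14 ^ 2)⁻¹,
    t14 * a14 * t14⁻¹ * b14⁻¹}

/-!
Writing `c = b a⁻¹`, the relations say that `a` commutes with `c` and that conjugation by `a`
sends `s ↦ c⁻² s` and `t ↦ c⁻¹ t`; hence the Gersten group is the semidirect product
`F(c, s, t) ⋊ ℤ` of a free group of rank three by the automorphism `ψ : c ↦ c, s ↦ c⁻² s,
t ↦ c⁻¹ t`, with `a` generating `ℤ`. Free groups and `ℤ` have the property that all their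
nontrivial subgroups surject onto `ℤ` (Nielsen–Schreier), and the property passes to extensions:
a subgroup either has nontrivial image in the quotient `ℤ`, or it lies in the free kernel.
-/

def IsIndicable (G : Type*) [Group G] : Prop :=
  ∃ f : G →* Multiplicative ℤ, Function.Surjective f

/-- Stronger than local indicability, which asks this only of finitely generated subgroups. -/
def SubgroupsIndicable (G : Type*) [Group G] : Prop :=
  ∀ S : Subgroup G, S ≠ ⊥ → IsIndicable S

theorem IsIndicable.of_surjective {G H : Type*} [Group G] [Group H] (hH : IsIndicable H)
    (f : G →* H) (hf : Function.Surjective f) : IsIndicable G :=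
  let ⟨g, hg⟩ := hH
  ⟨g.comp f, hg.comp hf⟩

theorem isIndicable_of_isFreeGroup (G : Type*) [Group G] [IsFreeGroup G] [Nontrivial G] :
    IsIndicable G := by
  obtain ⟨x₀⟩ : Nonempty (IsFreeGroup.Generators G) := by
    by_contra! h
    obtain ⟨g, hg⟩ := exists_ne (1 : G)
    have : MonoidHom.id G = 1 := IsFreeGroup.ext_hom fun x ↦ h.elim x
    exact hg (DFunLike.congr_fun this g)
  refine ⟨IsFreeGroup.lift fun _ ↦ Multiplicative.ofAdd 1, fun z ↦
    ⟨IsFreeGroup.of x₀ ^ z.toAdd, ?_⟩⟩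
  rw [map_zpow, IsFreeGroup.lift_of, ← ofAdd_zsmul, smul_eq_mul, mul_one, ofAdd_toAdd]

theorem subgroupsIndicable_of_isFreeGroup (G : Type*) [Group G] [IsFreeGroup G] :
    SubgroupsIndicable G := fun S hS ↦
  have : Nontrivial S := (Subgroup.nontrivial_iff_ne_bot S).mpr hS
  isIndicable_of_isFreeGroup S

theorem subgroupsIndicable_int : SubgroupsIndicable (Multiplicative ℤ) :=
  have : IsFreeGroup (Multiplicative ℤ) :=
    IsFreeGroup.ofMulEquiv (FreeGroup.mulEquivIntOfUnique (α := Unit))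
  subgroupsIndicable_of_isFreeGroup _

namespace SubgroupsIndicable

variable {G H : Type*} [Group G] [Group H]

theorem of_injective (hH : SubgroupsIndicable H) (f : G →* H)
    (hf : Function.Injective f) : SubgroupsIndicable G := fun S hS ↦
  (hH (S.map f) (by rwa [Ne, Subgroup.map_eq_bot_iff_of_injective S hf])).of_surjective
    (S.equivMapOfInjective f hf).toMonoidHom (S.equivMapOfInjective f hf).surjective

theorem of_ker (π : G →* H) (hH : SubgroupsIndicable H)
    (hK : SubgroupsIndicable π.ker) : SubgroupsIndicable G := by
  intro S hS
  by_cases hπS : S.map π = ⊥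
  · rw [Subgroup.map_eq_bot_iff] at hπS
    have hSK : S.subgroupOf π.ker ≠ ⊥ := by
      rwa [Ne, Subgroup.subgroupOf_eq_bot, disjoint_iff, inf_eq_left.mpr hπS]
    exact (hK _ hSK).of_surjective (Subgroup.subgroupOfEquivOfLe hπS).symm.toMonoidHom
      (Subgroup.subgroupOfEquivOfLe hπS).symm.surjective
  · exact (hH _ hπS).of_surjective (π.subgroupMap S) (π.subgroupMap_surjective S)

theorem semidirectProduct {N : Type*} [Group N] (φ : H →* MulAut N)
    (hN : SubgroupsIndicable N) (hH : SubgroupsIndicable H) :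
    SubgroupsIndicable (N ⋊[φ] H) :=
  let e : SemidirectProduct.rightHom.ker ≃* N :=
    ((MonoidHom.ofInjective SemidirectProduct.inl_injective).trans
      (MulEquiv.subgroupCongr SemidirectProduct.range_inl_eq_ker_rightHom)).symm
  of_ker SemidirectProduct.rightHom hH (hN.of_injective e.toMonoidHom e.injective)

end SubgroupsIndicable

theorem Function.Semiconj.mulAut_zpow {M N : Type*} [Mul M] [Mul N] {f : M → N}
    {ψ : MulAut M} {χ : MulAut N} (h : Function.Semiconj f ψ χ) (n : ℤ) :
    Function.Semiconj f ⇑(ψ ^ n) ⇑(χ ^ n) := by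
  have h_inv : Function.Semiconj f ⇑ψ⁻¹ ⇑χ⁻¹ :=
    h.inverses_right (MulAut.apply_inv_self M ψ) (MulAut.inv_apply_self N χ)
  induction n using Int.induction_on with
  | zero => exact Function.Semiconj.id_right
  | succ n ih => rw [zpow_add_one, zpow_add_one]; exact ih.comp_right h
  | pred n ih => rw [zpow_sub_one, zpow_sub_one]; exact ih.comp_right h_inv

namespace Gersten

open SemidirectProduct

abbrev F := FreeGroup (Fin 3)

def cF : F := FreeGroup.of 0
def sF : F := FreeGroup.of 1
def tF : F := FreeGroup.of 2

def ψ : MulAut F :=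
  MonoidHom.toMulEquiv (FreeGroup.lift ![cF, cF⁻¹ * cF⁻¹ * sF, cF⁻¹ * tF])
    (FreeGroup.lift ![cF, cF * cF * sF, cF * tF])
    (by ext i; fin_cases i <;> simp [cF, sF, tF, mul_assoc])
    (by ext i; fin_cases i <;> simp [cF, sF, tF, mul_assoc])

@[simp] lemma ψ_c : ψ cF = cF := by simp [ψ, cF]
@[simp] lemma ψ_s : ψ sF = cF⁻¹ * cF⁻¹ * sF := by simp [ψ, cF, sF]
@[simp] lemma ψ_t : ψ tF = cF⁻¹ * tF := by simp [ψ, cF, tF]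
@[simp] lemma ψ_symm_c : ψ.symm cF = cF := ψ.symm_apply_eq.mpr ψ_c.symm

abbrev H := F ⋊[zpowersHom (MulAut F) ψ] Multiplicative ℤ

def semidirectGen : Fin 4 → H :=
  ![inr (.ofAdd 1), inl cF * inr (.ofAdd 1), inl sF, inl tF]

lemma lift_semidirectGen_eq_one : ∀ r ∈ relsGersten, FreeGroup.lift semidirectGen r = 1 := by
  rintro r (rfl | rfl | rfl) <;>
    simp only [a14, b14, s14, t14, map_mul, map_inv, map_pow, FreeGroup.lift_apply_of,
      semidirectGen, mul_inv_eq_one] <;> ext <;> simp [pow_two]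

abbrev G := PresentedGroup relsGersten

def aG : G := PresentedGroup.of 0
def bG : G := PresentedGroup.of 1
def sG : G := PresentedGroup.of 2
def tG : G := PresentedGroup.of 3

lemma aG_mul_bG : aG * bG = bG * aG :=
  PresentedGroup.mk_eq_mk_of_mul_inv_mem (Or.inl rfl)

lemma sG_conj_aG : sG * aG * sG⁻¹ = aG⁻¹ * bG ^ 2 :=
  PresentedGroup.mk_eq_mk_of_mul_inv_mem (Or.inr (Or.inl rfl))

lemma tG_conj_aG : tG * aG * tG⁻¹ = bG :=
  PresentedGroup.mk_eq_mk_of_mul_inv_mem (Or.inr (Or.inr rfl))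

def toSemidirect : G →* H := PresentedGroup.toGroup lift_semidirectGen_eq_one

def cG : G := bG * aG⁻¹

def ofFree : F →* G := FreeGroup.lift ![cG, sG, tG]

@[simp] lemma ofFree_c : ofFree cF = cG := by simp [ofFree, cF]
@[simp] lemma ofFree_s : ofFree sF = sG := by simp [ofFree, sF]
@[simp] lemma ofFree_t : ofFree tF = tG := by simp [ofFree, tF]

lemma semiconj_ofFree_ψ : Function.Semiconj ofFree ψ (MulAut.conj aG) := by
  suffices ofFree.comp ψ.toMonoidHom = (MulAut.conj aG).toMonoidHom.comp ofFree from
    DFunLike.congr_fun this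
  ext i
  fin_cases i
  · show ofFree (ψ cF) = aG * ofFree cF * aG⁻¹
    simp only [ψ_c, ofFree_c, cG]
    calc bG * aG⁻¹ = (aG * bG) * aG⁻¹ * aG⁻¹ := by rw [aG_mul_bG]; group
      _ = aG * (bG * aG⁻¹) * aG⁻¹ := by group
  · show ofFree (ψ sF) = aG * ofFree sF * aG⁻¹
    have hs : sG * aG * sG⁻¹ = bG * aG⁻¹ * bG := by
      rw [sG_conj_aG]
      calc aG⁻¹ * bG ^ 2 = aG⁻¹ * (bG * aG) * aG⁻¹ * bG := by rw [pow_two]; group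
        _ = bG * aG⁻¹ * bG := by rw [← aG_mul_bG]; group
    simp only [ψ_s, map_mul, map_inv, ofFree_c, ofFree_s, cG]
    calc (bG * aG⁻¹)⁻¹ * (bG * aG⁻¹)⁻¹ * sG = aG * (bG * aG⁻¹ * bG)⁻¹ * sG := by group
      _ = aG * sG * aG⁻¹ := by rw [← hs]; group
  · show ofFree (ψ tF) = aG * ofFree tF * aG⁻¹
    simp only [ψ_t, map_mul, map_inv, ofFree_c, ofFree_t, cG]
    rw [← tG_conj_aG]
    group

def ofSemidirect : H →* G :=
  SemidirectProduct.lift ofFree (zpowersHom G aG) fun n ↦ MonoidHom.ext fun x ↦ by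
    simpa only [MonoidHom.comp_apply, MulEquiv.coe_toMonoidHom, zpowersHom_apply, map_zpow]
      using semiconj_ofFree_ψ.mulAut_zpow n.toAdd x

lemma leftInverse_ofSemidirect : Function.LeftInverse ofSemidirect toSemidirect :=
  DFunLike.congr_fun (show ofSemidirect.comp toSemidirect = .id G from
    PresentedGroup.ext fun i ↦ by
      fin_cases i <;> simp [toSemidirect, ofSemidirect, PresentedGroup.toGroup.of,
        semidirectGen, cG, aG, bG, sG, tG])

theorem subgroupsIndicable : SubgroupsIndicable G :=
  (SubgroupsIndicable.semidirectProduct _ (subgroupsIndicable_of_isFreeGroup F)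
    subgroupsIndicable_int).of_injective toSemidirect leftInverse_ofSemidirect.injective

end Gersten

/-- Example 5.2: every nontrivial subgroup of the Gersten group admits a surjective
homomorphism onto ℤ (the group is locally indicable, even for non finitely generated
subgroups). -/
theorem Gersten_subgroups_surject_Z :
    ∀ S : Subgroup (PresentedGroup relsGersten), S ≠ ⊥ →
      ∃ f : S →* Multiplicative ℤ, Function.Surjective f :=
  Gersten.subgroupsIndicable
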